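/- arXiv:1910.02317 — 4 statements merged into one kernel-verified Lean document; each statement's English description precedes it below -/
import Mathlib

section
/- Let Q be a positive definite real n×n matrix, let α > 0, and let A₀ be a real n×n matrix with A₀ Q + Q A₀ᵀ + 2α Q negative semidefinite. Then for every t ≥ 0 and every vector v ∈ Fin n → ℝ, (exp(t A₀) v)ᵀ Q⁻¹ (exp(t A₀) v) ≤ e^{−2αt} · vᵀ Q⁻¹ v, where exp denotes the matrix exponential. -/
/-! Congruence by `P = Q⁻¹` turns the LMI into `A₀ᵀ P + P A₀ ⪯ -2αP`, so along the trajectory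
`x(t) = exp(t A₀) v` the Lyapunov function `V(x) = xᵀ P x` satisfies `V' ≤ -2αV`; Grönwall's
inequality then gives `V(x(t)) ≤ exp(-2αt) V(v)`. -/

open Matrix

section

variable {ι : Type*} [Fintype ι]

theorem Matrix.PosSemidef.neg_lyapunov_inv [DecidableEq ι] {Q A : Matrix ι ι ℝ}
    (hQ : Q.IsHermitian) (hdet : IsUnit Q.det) {c : ℝ}
    (h : (-(A * Q + Q * Aᵀ + c • Q)).PosSemidef) :
    (-(Q⁻¹ * A + Aᵀ * Q⁻¹ + c • Q⁻¹)).PosSemidef := by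
  have hQP : Q * Q⁻¹ = 1 := mul_nonsing_inv Q hdet
  have hPQ : Q⁻¹ * Q = 1 := nonsing_inv_mul Q hdet
  have hcongr : Q⁻¹ * (-(A * Q + Q * Aᵀ + c • Q)) * (Q⁻¹)ᴴ =
      -(Q⁻¹ * A + Aᵀ * Q⁻¹ + c • Q⁻¹) := by
    rw [hQ.inv.eq]
    simp only [Matrix.mul_neg, Matrix.neg_mul, Matrix.mul_add, Matrix.add_mul, Matrix.mul_smul,
      Matrix.smul_mul, ← Matrix.mul_assoc, hPQ, Matrix.one_mul]
    simp only [Matrix.mul_assoc, hQP, Matrix.mul_one]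
  exact hcongr ▸ h.mul_mul_conjTranspose_same Q⁻¹

theorem Matrix.PosSemidef.dotProduct_lyapunov_le {P A : Matrix ι ι ℝ} {c : ℝ}
    (h : (-(P * A + Aᵀ * P + c • P)).PosSemidef) (u : ι → ℝ) :
    A *ᵥ u ⬝ᵥ P *ᵥ u + u ⬝ᵥ P *ᵥ (A *ᵥ u) ≤ -c * (u ⬝ᵥ P *ᵥ u) := by
  have hu := h.dotProduct_mulVec_nonneg u
  have hAu : A *ᵥ u ⬝ᵥ P *ᵥ u = u ⬝ᵥ (Aᵀ * P) *ᵥ u := by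
    rw [← mulVec_mulVec, dotProduct_mulVec u, vecMul_transpose]
  rw [hAu, mulVec_mulVec]
  simp only [star_trivial, neg_mulVec, add_mulVec, smul_mulVec, dotProduct_neg, dotProduct_add,
    dotProduct_smul, smul_eq_mul] at hu
  linarith

theorem hasDerivAt_exp_smul_mulVec [DecidableEq ι] (A : Matrix ι ι ℝ) (v : ι → ℝ) (s : ℝ) :
    HasDerivAt (fun t : ℝ => NormedSpace.exp (t • A) *ᵥ v)
      (A *ᵥ (NormedSpace.exp (s • A) *ᵥ v)) s := by
  -- `NormedSpace.exp` does not depend on the norm, so any algebra norm on matrices will do.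
  let := Matrix.linftyOpNormedRing (n := ι) (α := ℝ)
  let := Matrix.linftyOpNormedAlgebra (n := ι) (R := ℝ) (α := ℝ)
  let mulVecV : Matrix ι ι ℝ →L[ℝ] ι → ℝ :=
    (LinearMap.applyₗ v ∘ₗ (Matrix.toLin' : Matrix ι ι ℝ ≃ₗ[ℝ] _).toLinearMap).toContinuousLinearMap
  have h := mulVecV.hasFDerivAt.comp_hasDerivAt s (hasDerivAt_exp_smul_const' A s)
  have e : mulVecV (A * NormedSpace.exp (s • A)) = A *ᵥ (NormedSpace.exp (s • A) *ᵥ v) := by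
    simp [mulVecV, mulVec_mulVec]
  exact e ▸ h

theorem HasDerivAt.dotProduct_mulVec [DecidableEq ι] {x : ℝ → ι → ℝ} {x' : ι → ℝ} {s : ℝ}
    (P : Matrix ι ι ℝ) (hx : HasDerivAt x x' s) :
    HasDerivAt (fun t => x t ⬝ᵥ P *ᵥ x t) (x' ⬝ᵥ P *ᵥ x s + x s ⬝ᵥ P *ᵥ x') s := by
  have := (toLinearMap₂' ℝ P).toContinuousBilinearMap.hasDerivAt_of_bilinear
    (fun _ => hx) (fun _ => hx)
  simpa [toLinearMap₂'_apply', add_comm] using this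

theorem le_exp_mul_mul_of_hasDerivAt_le {f f' : ℝ → ℝ} {K t : ℝ}
    (hf : ∀ s, HasDerivAt f (f' s) s) (bound : ∀ s, f' s ≤ K * f s) (ht : 0 ≤ t) :
    f t ≤ Real.exp (K * t) * f 0 := by
  have := le_gronwallBound_of_liminf_deriv_right_le (K := K) (ε := 0) (b := t)
    (fun s _ => (hf s).continuousAt.continuousWithinAt)
    (fun s _ _ hr => (hf s).hasDerivWithinAt.liminf_right_slope_le hr) le_rfl
    (fun s _ => by simpa using bound s) t ⟨ht, le_rfl⟩
  rwa [gronwallBound_ε0, sub_zero, mul_comm] at this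

end

theorem matrixExp_lyapunov_decay_general (n : ℕ)
    (Q : Matrix (Fin n) (Fin n) ℝ) (hQ : Q.PosDef)
    (α : ℝ)
    (A₀ : Matrix (Fin n) (Fin n) ℝ)
    (hLMI : (-(A₀ * Q + Q * A₀ᵀ + (2 * α) • Q)).PosSemidef) :
    ∀ t : ℝ, 0 ≤ t → ∀ v : Fin n → ℝ,
      (NormedSpace.exp (t • A₀)).mulVec v ⬝ᵥ Q⁻¹.mulVec ((NormedSpace.exp (t • A₀)).mulVec v)
        ≤ Real.exp (-(2 * α) * t) * (v ⬝ᵥ Q⁻¹.mulVec v) := by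
  intro t ht v
  have hLMIinv := hLMI.neg_lyapunov_inv hQ.isHermitian (isUnit_iff_ne_zero.2 hQ.det_pos.ne')
  have hx := hasDerivAt_exp_smul_mulVec A₀ v
  simpa [NormedSpace.exp_zero] using le_exp_mul_mul_of_hasDerivAt_le
    (fun s => (hx s).dotProduct_mulVec Q⁻¹)
    (fun s => hLMIinv.dotProduct_lyapunov_le (NormedSpace.exp (s • A₀) *ᵥ v)) ht

/-- if `A₀ Q + Q A₀ᵀ + 2αQ ⪯ 0`, then for every `t ≥ 0` and every vector `v`,
`(e^{tA₀} v)ᵀ Q⁻¹ (e^{tA₀} v) ≤ e^{-2αt} vᵀ Q⁻¹ v`. -/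
theorem matrixExp_lyapunov_decay (n : ℕ)
    (Q : Matrix (Fin n) (Fin n) ℝ) (hQ : Q.PosDef)
    (α : ℝ) (hα : 0 < α)
    (A₀ : Matrix (Fin n) (Fin n) ℝ)
    (hLMI : (-(A₀ * Q + Q * A₀ᵀ + (2 * α) • Q)).PosSemidef) :
    ∀ t : ℝ, 0 ≤ t → ∀ v : Fin n → ℝ,
      (NormedSpace.exp (t • A₀)).mulVec v ⬝ᵥ Q⁻¹.mulVec ((NormedSpace.exp (t • A₀)).mulVec v)
        ≤ Real.exp (-(2 * α) * t) * (v ⬝ᵥ Q⁻¹.mulVec v) :=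
  matrixExp_lyapunov_decay_general n Q hQ α A₀ hLMI
end

section
/- Let Q_1, …, Q_m be positive definite real n×n matrices, let V_c(x) = min over γ in the standard simplex of xᵀ (∑_j γ_j Q_j)⁻¹ x, and define ‖x‖_c = √(V_c(x)). Then ‖·‖_c satisfies the triangle inequality: ‖x + y‖_c ≤ ‖x‖_c + ‖y‖_c for all x, y ∈ Fin n → ℝ. -/
open Matrix

/-- The composite quadratic Lyapunov function
`V_c(x) = inf_{γ ∈ Δ} xᵀ (∑ j γ_j Q_j)⁻¹ x`, where `Δ` is the standard simplex. -/
noncomputable def compQuad {m n : ℕ} (Q : Fin m → Matrix (Fin n) (Fin n) ℝ)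
    (x : Fin n → ℝ) : ℝ :=
  sInf ((fun γ : Fin m → ℝ => x ⬝ᵥ ((∑ j, γ j • Q j)⁻¹).mulVec x) '' stdSimplex ℝ (Fin m))

/-- The composite vector norm `‖x‖_c = √(V_c(x))`. -/
noncomputable def compNorm {m n : ℕ} (Q : Fin m → Matrix (Fin n) (Fin n) ℝ)
    (x : Fin n → ℝ) : ℝ :=
  Real.sqrt (compQuad Q x)

/-!
For a positive definite `M`, `xᵀ M⁻¹ x = sup_z (2 zᵀx - zᵀ M z)` (attained at `z = M⁻¹ x`), a
supremum of functions jointly linear in `(x, M)`; hence `(x, M) ↦ xᵀ M⁻¹ x` is subadditive, and it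
satisfies `xᵀ (t M)⁻¹ x = xᵀ M⁻¹ x / t`. Writing `M_γ = ∑ γ_j Q_j`, if `xᵀ M_γ⁻¹ x ≤ a²` and
`yᵀ M_θ⁻¹ y ≤ b²`, the mixed weight `(a γ + b θ) / (a + b)` thus gives
`(x + y)ᵀ M⁻¹ (x + y) ≤ a (a + b) + b (a + b) = (a + b)²`.
-/

namespace Matrix

lemma PosDef.sum_smul_of_mem_stdSimplex {n ι : Type*} [Fintype ι] {Q : ι → Matrix n n ℝ}
    (hQ : ∀ j, (Q j).PosDef) {γ : ι → ℝ} (hγ : γ ∈ stdSimplex ℝ ι) :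
    (∑ j, γ j • Q j).PosDef := by
  classical
  obtain ⟨j₀, -, hj₀⟩ : ∃ j ∈ Finset.univ, (0 : ℝ) < γ j :=
    Finset.exists_lt_of_sum_lt (by simp [hγ.2])
  rw [← Finset.add_sum_erase _ _ (Finset.mem_univ j₀)]
  exact ((hQ j₀).smul hj₀).add_posSemidef <|
    posSemidef_sum _ fun j _ => (hQ j).posSemidef.smul (hγ.1 j)

variable {n : Type*} [Fintype n] [DecidableEq n]

lemma PosDef.two_mul_dotProduct_sub_le {M : Matrix n n ℝ} (hM : M.PosDef) (x z : n → ℝ) :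
    2 * (z ⬝ᵥ x) - z ⬝ᵥ M *ᵥ z ≤ x ⬝ᵥ M⁻¹ *ᵥ x := by
  set w := M⁻¹ *ᵥ x
  have hMw : M *ᵥ w = x := by
    rw [mulVec_mulVec, mul_nonsing_inv _ hM.det_pos.ne'.isUnit, one_mulVec]
  have hsymm : w ⬝ᵥ M *ᵥ z = z ⬝ᵥ x := by
    rw [← hMw, dotProduct_mulVec, ← mulVec_transpose, ← conjTranspose_eq_transpose_of_trivial,
      hM.isHermitian.eq, dotProduct_comm]
  have hsq : 0 ≤ (z - w) ⬝ᵥ M *ᵥ (z - w) := by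
    simpa using hM.posSemidef.dotProduct_mulVec_nonneg (z - w)
  have hwx : w ⬝ᵥ x = x ⬝ᵥ w := dotProduct_comm _ _
  rw [mulVec_sub, hMw, sub_dotProduct, dotProduct_sub, dotProduct_sub, hsymm, hwx] at hsq
  linarith

lemma PosDef.dotProduct_inv_mulVec_add_le {A B : Matrix n n ℝ} (hA : A.PosDef) (hB : B.PosDef)
    (x y : n → ℝ) :
    (x + y) ⬝ᵥ (A + B)⁻¹ *ᵥ (x + y) ≤ x ⬝ᵥ A⁻¹ *ᵥ x + y ⬝ᵥ B⁻¹ *ᵥ y := by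
  set w := (A + B)⁻¹ *ᵥ (x + y)
  have hw : (A + B) *ᵥ w = x + y := by
    rw [mulVec_mulVec, mul_nonsing_inv _ (hA.add hB).det_pos.ne'.isUnit, one_mulVec]
  have hval : (x + y) ⬝ᵥ (A + B)⁻¹ *ᵥ (x + y) =
      (2 * (w ⬝ᵥ x) - w ⬝ᵥ A *ᵥ w) + (2 * (w ⬝ᵥ y) - w ⬝ᵥ B *ᵥ w) := by
    have : w ⬝ᵥ A *ᵥ w + w ⬝ᵥ B *ᵥ w = w ⬝ᵥ x + w ⬝ᵥ y := by
      rw [← dotProduct_add, ← add_mulVec, hw, dotProduct_add]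
    rw [dotProduct_comm, dotProduct_add]
    linarith
  rw [hval]
  exact add_le_add (hA.two_mul_dotProduct_sub_le x w) (hB.two_mul_dotProduct_sub_le y w)

lemma PosDef.dotProduct_smul_inv_mulVec {A : Matrix n n ℝ} (hA : A.PosDef) {t : ℝ} (ht : t ≠ 0)
    (x : n → ℝ) : x ⬝ᵥ (t • A)⁻¹ *ᵥ x = x ⬝ᵥ A⁻¹ *ᵥ x / t := by
  have := invertibleOfNonzero ht
  rw [inv_smul _ _ hA.det_pos.ne'.isUnit, invOf_eq_inv, smul_mulVec, dotProduct_smul, smul_eq_mul,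
    inv_mul_eq_div]

lemma PosDef.dotProduct_inv_mulVec_smul_add_smul_le {A B : Matrix n n ℝ} (hA : A.PosDef)
    (hB : B.PosDef) {s t : ℝ} (hs : 0 < s) (ht : 0 < t) (x y : n → ℝ) :
    (x + y) ⬝ᵥ (s • A + t • B)⁻¹ *ᵥ (x + y) ≤ x ⬝ᵥ A⁻¹ *ᵥ x / s + y ⬝ᵥ B⁻¹ *ᵥ y / t := by
  rw [← hA.dotProduct_smul_inv_mulVec hs.ne', ← hB.dotProduct_smul_inv_mulVec ht.ne']
  exact (hA.smul hs).dotProduct_inv_mulVec_add_le (hB.smul ht) x y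

end Matrix

section CompositeNorm

variable {m n : ℕ} {Q : Fin m → Matrix (Fin n) (Fin n) ℝ}

lemma compQuad_le (hQ : ∀ j, (Q j).PosDef) {γ : Fin m → ℝ} (hγ : γ ∈ stdSimplex ℝ (Fin m))
    (x : Fin n → ℝ) : compQuad Q x ≤ x ⬝ᵥ (∑ j, γ j • Q j)⁻¹ *ᵥ x := by
  refine csInf_le ⟨0, ?_⟩ ⟨γ, hγ, rfl⟩
  rintro _ ⟨θ, hθ, rfl⟩
  simpa using (PosDef.sum_smul_of_mem_stdSimplex hQ hθ).inv.posSemidef.dotProduct_mulVec_nonneg x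

lemma exists_lt_of_compNorm_lt (hm : 0 < m) {x : Fin n → ℝ} {a : ℝ} (ha : compNorm Q x < a) :
    ∃ γ ∈ stdSimplex ℝ (Fin m), x ⬝ᵥ (∑ j, γ j • Q j)⁻¹ *ᵥ x < a ^ 2 := by
  have hQx : compQuad Q x < a ^ 2 :=
    (Real.sqrt_lt' ((Real.sqrt_nonneg _).trans_lt ha)).mp ha
  obtain ⟨_, ⟨γ, hγ, rfl⟩, hlt⟩ :=
    exists_lt_of_csInf_lt (Set.Nonempty.image _ ⟨_, single_mem_stdSimplex ℝ ⟨0, hm⟩⟩) hQx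
  exact ⟨γ, hγ, hlt⟩

lemma compNorm_add_le_of_lt (hm : 0 < m) (hQ : ∀ j, (Q j).PosDef) {x y : Fin n → ℝ} {a b : ℝ}
    (ha : compNorm Q x < a) (hb : compNorm Q y < b) : compNorm Q (x + y) ≤ a + b := by
  obtain ⟨γ, hγ, hxγ⟩ := exists_lt_of_compNorm_lt hm ha
  obtain ⟨θ, hθ, hyθ⟩ := exists_lt_of_compNorm_lt hm hb
  have ha0 : 0 < a := (Real.sqrt_nonneg _).trans_lt ha
  have hb0 : 0 < b := (Real.sqrt_nonneg _).trans_lt hb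
  set s := a / (a + b)
  set t := b / (a + b)
  have hs : 0 < s := by positivity
  have ht : 0 < t := by positivity
  have hμ : s • γ + t • θ ∈ stdSimplex ℝ (Fin m) :=
    convex_stdSimplex ℝ (Fin m) hγ hθ hs.le ht.le (by simp only [s, t]; field_simp)
  have hsplit : ∑ j, (s • γ + t • θ) j • Q j = s • ∑ j, γ j • Q j + t • ∑ j, θ j • Q j := by
    simp only [Pi.add_apply, Pi.smul_apply, smul_eq_mul, add_smul, mul_smul, Finset.sum_add_distrib,
      Finset.smul_sum]
  rw [compNorm, Real.sqrt_le_iff]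
  refine ⟨by positivity, ?_⟩
  calc compQuad Q (x + y) ≤ (x + y) ⬝ᵥ (∑ j, (s • γ + t • θ) j • Q j)⁻¹ *ᵥ (x + y) :=
        compQuad_le hQ hμ _
    _ ≤ x ⬝ᵥ (∑ j, γ j • Q j)⁻¹ *ᵥ x / s + y ⬝ᵥ (∑ j, θ j • Q j)⁻¹ *ᵥ y / t := by
        rw [hsplit]
        exact (PosDef.sum_smul_of_mem_stdSimplex hQ hγ).dotProduct_inv_mulVec_smul_add_smul_le
          (PosDef.sum_smul_of_mem_stdSimplex hQ hθ) hs ht x y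
    _ ≤ a ^ 2 / s + b ^ 2 / t := by gcongr
    _ = (a + b) ^ 2 := by simp only [s, t]; field_simp

end CompositeNorm

/-- the composite vector norm satisfies the triangle inequality. -/
theorem compNorm_triangle (m n : ℕ) (hm : 0 < m)
    (Q : Fin m → Matrix (Fin n) (Fin n) ℝ) (hQ : ∀ j, (Q j).PosDef) :
    ∀ x y : Fin n → ℝ, compNorm Q (x + y) ≤ compNorm Q x + compNorm Q y := by
  intro x y
  refine le_of_forall_pos_le_add fun ε hε => ?_
  have h := compNorm_add_le_of_lt hm hQ (lt_add_of_pos_right (compNorm Q x) (half_pos hε))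
    (lt_add_of_pos_right (compNorm Q y) (half_pos hε))
  linarith
end

section
/- Let Q_1, …, Q_m be positive definite real n×n matrices, let α > 0, and let A₀ be a real n×n matrix such that A₀ Q_j + Q_j A₀ᵀ + 2α Q_j is negative semidefinite for every j = 1, …, m. Let ε : ℝ → (Fin n → ℝ) be differentiable with ε'(t) = A₀ ε(t) for all t. Then for all t ≥ 0, V_c(ε(t)) ≤ e^{−2αt} V_c(ε(0)); equivalently, ‖ε(t)‖_c ≤ e^{−αt} ‖ε(0)‖_c. -/
open Matrix

theorem le_mul_exp_of_hasDerivAt_le_mul {g g' : ℝ → ℝ} {K t : ℝ}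
    (hg : ∀ s, HasDerivAt g (g' s) s) (hle : ∀ s, g' s ≤ K * g s) (ht : 0 ≤ t) :
    g t ≤ g 0 * Real.exp (K * t) := by
  have := le_gronwallBound_of_liminf_deriv_right_le (f := g) (ε := 0) (b := t)
    (fun s _ => (hg s).continuousAt.continuousWithinAt)
    (fun s _ _ hr => (hg s).hasDerivWithinAt.liminf_right_slope_le hr) le_rfl
    (fun s _ => by simpa using hle s) t ⟨ht, le_rfl⟩
  simpa [gronwallBound_ε0] using this

section Calculus

variable {𝕜 : Type*} [NontriviallyNormedField 𝕜] {m n : Type*} [Fintype n]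
  {f g : 𝕜 → n → 𝕜} {f' g' : n → 𝕜} {t : 𝕜}

theorem HasDerivAt.dotProduct (hf : HasDerivAt f f' t) (hg : HasDerivAt g g' t) :
    HasDerivAt (fun s => f s ⬝ᵥ g s) (f' ⬝ᵥ g t + f t ⬝ᵥ g') t := by
  have := HasDerivAt.fun_sum (u := Finset.univ) fun i _ =>
    (hasDerivAt_pi.mp hf i).mul (hasDerivAt_pi.mp hg i)
  rwa [Finset.sum_add_distrib] at this

theorem HasDerivAt.mulVec (M : Matrix m n 𝕜) (hf : HasDerivAt f f' t) :
    HasDerivAt (fun s => M *ᵥ f s) (M *ᵥ f') t :=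
  hasDerivAt_pi.2 fun i =>
    HasDerivAt.fun_sum fun j _ => (hasDerivAt_pi.mp hf j).const_mul (M i j)

end Calculus

theorem Matrix.posDef_sum_smul_of_mem_stdSimplex {n ι : Type*} [Fintype ι]
    {Q : ι → Matrix n n ℝ} (hQ : ∀ j, (Q j).PosDef) {γ : ι → ℝ}
    (hγ : γ ∈ stdSimplex ℝ ι) : (∑ j, γ j • Q j).PosDef := by
  classical
  obtain ⟨j₀, -, hj₀⟩ : ∃ j ∈ Finset.univ, (0 : ℝ) < γ j :=
    Finset.exists_lt_of_sum_lt (by simp [hγ.2])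
  rw [← Finset.add_sum_erase _ _ (Finset.mem_univ j₀)]
  exact ((hQ j₀).smul hj₀).add_posSemidef <|
    posSemidef_sum _ fun j _ => (hQ j).posSemidef.smul (hγ.1 j)

theorem Matrix.posSemidef_neg_lyapunov_sum_smul {n ι : Type*} [Fintype n] [Fintype ι]
    {A : Matrix n n ℝ} {c : ℝ} {Q : ι → Matrix n n ℝ}
    (hQ : ∀ j, (-(A * Q j + Q j * Aᵀ + c • Q j)).PosSemidef) {γ : ι → ℝ} (hγ : ∀ j, 0 ≤ γ j) :
    (-(A * (∑ j, γ j • Q j) + (∑ j, γ j • Q j) * Aᵀ + c • ∑ j, γ j • Q j)).PosSemidef := by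
  have hlin : -(A * (∑ j, γ j • Q j) + (∑ j, γ j • Q j) * Aᵀ + c • ∑ j, γ j • Q j)
      = ∑ j, γ j • -(A * Q j + Q j * Aᵀ + c • Q j) := by
    simp only [Finset.mul_sum, Finset.sum_mul, Finset.smul_sum, mul_smul_comm, smul_mul_assoc,
      smul_comm c, ← Finset.sum_add_distrib, ← Finset.sum_neg_distrib, smul_add, smul_neg]
  rw [hlin]
  exact posSemidef_sum _ fun j _ => (hQ j).smul (hγ j)

theorem Matrix.PosSemidef.neg_lyapunov_inv_s9 {n : Type*} [Fintype n] [DecidableEq n]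
    {A P : Matrix n n ℝ} {c : ℝ} (hP : P.PosDef)
    (h : (-(A * P + P * Aᵀ + c • P)).PosSemidef) :
    (-(Aᵀ * P⁻¹ + P⁻¹ * A + c • P⁻¹)).PosSemidef := by
  have hdet : IsUnit P.det := (isUnit_iff_isUnit_det _).1 hP.isUnit
  have := h.mul_mul_conjTranspose_same P⁻¹
  rw [hP.inv.isHermitian.eq] at this
  convert this using 1
  simp only [mul_neg, neg_mul, mul_add, add_mul, Matrix.mul_smul, Matrix.smul_mul, ← mul_assoc,
    nonsing_inv_mul _ hdet, one_mul, mul_nonsing_inv_cancel_right P _ hdet]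
  abel

theorem dotProduct_mulVec_le_exp_of_neg_lyapunov {n : Type*} [Fintype n]
    {A M : Matrix n n ℝ} {c : ℝ} (hM : (-(Aᵀ * M + M * A + c • M)).PosSemidef)
    {ε : ℝ → n → ℝ} (hε : ∀ t, HasDerivAt ε (A *ᵥ ε t) t) {t : ℝ} (ht : 0 ≤ t) :
    ε t ⬝ᵥ (M *ᵥ ε t) ≤ ε 0 ⬝ᵥ (M *ᵥ ε 0) * Real.exp (-c * t) := by
  refine le_mul_exp_of_hasDerivAt_le_mul (fun s => (hε s).dotProduct ((hε s).mulVec M))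
    (fun s => ?_) ht
  have := hM.dotProduct_mulVec_nonneg (ε s)
  simp only [star_trivial, neg_mulVec, dotProduct_neg, add_mulVec, dotProduct_add, smul_mulVec,
    dotProduct_smul, smul_eq_mul, ← mulVec_mulVec, dotProduct_mulVec _ Aᵀ, vecMul_transpose] at this
  linarith

theorem compQuad_eq_iInf {m n : ℕ} (Q : Fin m → Matrix (Fin n) (Fin n) ℝ) (x : Fin n → ℝ) :
    compQuad Q x = ⨅ γ : stdSimplex ℝ (Fin m), x ⬝ᵥ ((∑ j, γ.1 j • Q j)⁻¹ *ᵥ x) := by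
  rw [compQuad, Set.image_eq_range]
  rfl

theorem compQuad_le_mul_of_forall_mem_stdSimplex {m n : ℕ}
    {Q : Fin m → Matrix (Fin n) (Fin n) ℝ} (hQ : ∀ j, (Q j).PosDef) {x y : Fin n → ℝ} {c : ℝ}
    (hc : 0 ≤ c) (h : ∀ γ ∈ stdSimplex ℝ (Fin m),
      y ⬝ᵥ ((∑ j, γ j • Q j)⁻¹ *ᵥ y) ≤ c * x ⬝ᵥ ((∑ j, γ j • Q j)⁻¹ *ᵥ x)) :
    compQuad Q y ≤ c * compQuad Q x := by
  rw [compQuad_eq_iInf, compQuad_eq_iInf, Real.mul_iInf_of_nonneg hc]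
  refine ciInf_mono ⟨0, Set.forall_mem_range.2 fun γ => ?_⟩ fun γ => h γ γ.2
  simpa only [star_trivial] using
    (posDef_sum_smul_of_mem_stdSimplex hQ γ.2).inv.posSemidef.dotProduct_mulVec_nonneg y

theorem compQuad_lyapunov_decay_general (m n : ℕ)
    (Q : Fin m → Matrix (Fin n) (Fin n) ℝ) (hQ : ∀ j, (Q j).PosDef)
    (α : ℝ)
    (A₀ : Matrix (Fin n) (Fin n) ℝ)
    (hLMI : ∀ j : Fin m, (-(A₀ * Q j + Q j * A₀ᵀ + (2 * α) • Q j)).PosSemidef)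
    (ε : ℝ → (Fin n → ℝ))
    (hε : ∀ t : ℝ, HasDerivAt ε (A₀.mulVec (ε t)) t) :
    ∀ t : ℝ, 0 ≤ t →
      compQuad Q (ε t) ≤ Real.exp (-(2 * α) * t) * compQuad Q (ε 0) ∧
      compNorm Q (ε t) ≤ Real.exp (-α * t) * compNorm Q (ε 0) := by
  intro t ht
  have hquad : compQuad Q (ε t) ≤ Real.exp (-(2 * α) * t) * compQuad Q (ε 0) :=
    compQuad_le_mul_of_forall_mem_stdSimplex hQ (Real.exp_nonneg _) fun γ hγ => by
      rw [mul_comm]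
      exact dotProduct_mulVec_le_exp_of_neg_lyapunov
        ((posSemidef_neg_lyapunov_sum_smul hLMI hγ.1).neg_lyapunov_inv_s9
          (posDef_sum_smul_of_mem_stdSimplex hQ hγ)) hε ht
  refine ⟨hquad, ?_⟩
  calc compNorm Q (ε t) ≤ √(Real.exp (-(2 * α) * t) * compQuad Q (ε 0)) :=
        Real.sqrt_le_sqrt hquad
    _ = Real.exp (-α * t) * compNorm Q (ε 0) := by
        rw [Real.sqrt_mul (Real.exp_nonneg _), ← Real.exp_half, compNorm]
        ring_nf

/-- if `A₀ Q_j + Q_j A₀ᵀ + 2α Q_j ⪯ 0` for every `j` and `ε' = A₀ ε`, then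
`V_c(ε(t)) ≤ e^{-2αt} V_c(ε(0))`, equivalently `‖ε(t)‖_c ≤ e^{-αt} ‖ε(0)‖_c`,
for all `t ≥ 0`. -/
theorem compQuad_lyapunov_decay (m n : ℕ) (hm : 0 < m)
    (Q : Fin m → Matrix (Fin n) (Fin n) ℝ) (hQ : ∀ j, (Q j).PosDef)
    (α : ℝ) (hα : 0 < α)
    (A₀ : Matrix (Fin n) (Fin n) ℝ)
    (hLMI : ∀ j : Fin m, (-(A₀ * Q j + Q j * A₀ᵀ + (2 * α) • Q j)).PosSemidef)
    (ε : ℝ → (Fin n → ℝ))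
    (hε : ∀ t : ℝ, HasDerivAt ε (A₀.mulVec (ε t)) t) :
    ∀ t : ℝ, 0 ≤ t →
      compQuad Q (ε t) ≤ Real.exp (-(2 * α) * t) * compQuad Q (ε 0) ∧
      compNorm Q (ε t) ≤ Real.exp (-α * t) * compNorm Q (ε 0) :=
  compQuad_lyapunov_decay_general m n Q hQ α A₀ hLMI ε hε
end

section
/- Let Q_1, …, Q_m be positive definite real n×n matrices and let f ∈ Fin n → ℝ satisfy f Q_j fᵀ ≤ 1 (i.e., f ⬝ (Q_j f) ≤ 1) for every j = 1, …, m. Then every x in the composite unit ball Ω_c = {x : V_c(x) ≤ 1}, where V_c(x) = min over γ in the standard simplex of xᵀ (∑_j γ_j Q_j)⁻¹ x, satisfies |f · x| ≤ 1. -/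
/-!
For `γ` in the simplex, `P = ∑ γ_j Q_j` is positive definite and `f P fᵀ ≤ 1` by convexity.
Cauchy–Schwarz for the form of `P`, applied to `f` and `P⁻¹ x`, gives
`(f · x)² ≤ (f P fᵀ) (xᵀ P⁻¹ x) ≤ xᵀ P⁻¹ x`, so `(f · x)²` is a lower bound of the values whose
infimum is `V_c(x) ≤ 1`.
-/

open Matrix

namespace Matrix

variable {ι n : Type*} [Fintype ι]

theorem PosSemidef.dotProduct_mulVec_sq_le {R : Type*} [CommRing R] [LinearOrder R]
    [IsStrictOrderedRing R] [StarRing R] [TrivialStar R] [Fintype n] {P : Matrix n n R}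
    (hP : P.PosSemidef) (u v : n → R) :
    (u ⬝ᵥ P *ᵥ v) ^ 2 ≤ (u ⬝ᵥ P *ᵥ u) * (v ⬝ᵥ P *ᵥ v) := by
  classical
  have hsymm : P.toBilin'.IsSymm :=
    isSymm_toBilin'_iff_isSymm.mpr (isHermitian_iff_isSymm.mp hP.1)
  simpa only [toBilin'_apply'] using
    P.toBilin'.apply_sq_le_of_symm
      (fun w => by simpa [toBilin'_apply'] using hP.dotProduct_mulVec_nonneg w)
      (LinearMap.BilinForm.isSymm_iff.mp hsymm) u v

theorem PosDef.dotProduct_sq_le_mul_inv [Fintype n] [DecidableEq n] {P : Matrix n n ℝ}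
    (hP : P.PosDef) (f x : n → ℝ) : (f ⬝ᵥ x) ^ 2 ≤ (f ⬝ᵥ P *ᵥ f) * (x ⬝ᵥ P⁻¹ *ᵥ x) := by
  have hx : P *ᵥ P⁻¹ *ᵥ x = x := by
    rw [mulVec_mulVec, mul_nonsing_inv P hP.det_pos.ne'.isUnit, one_mulVec]
  simpa only [hx, dotProduct_comm (P⁻¹ *ᵥ x) x] using
    hP.posSemidef.dotProduct_mulVec_sq_le f (P⁻¹ *ᵥ x)

theorem posDef_sum_smul_of_mem_stdSimplex_s18 {Q : ι → Matrix n n ℝ} (hQ : ∀ j, (Q j).PosDef)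
    {γ : ι → ℝ} (hγ : γ ∈ stdSimplex ℝ ι) : (∑ j, γ j • Q j).PosDef := by
  classical
  have hpos : (Finset.univ.filter fun j => 0 < γ j).Nonempty := by
    obtain ⟨j, -, hj⟩ := Finset.exists_lt_of_sum_lt (s := Finset.univ) (f := 0) (g := γ)
      (by simp [hγ.2])
    exact ⟨j, by simpa using hj⟩
  rw [← Finset.sum_filter_of_ne (p := fun j => 0 < γ j) fun j _ hj =>
    (hγ.1 j).lt_of_ne' fun h0 => hj (by simp [h0])]
  exact posDef_sum hpos fun j hj => (hQ j).smul (Finset.mem_filter.mp hj).2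

theorem dotProduct_sum_smul_mulVec_le_one [Fintype n] {Q : ι → Matrix n n ℝ} {f : n → ℝ}
    (hf : ∀ j, f ⬝ᵥ Q j *ᵥ f ≤ 1) {γ : ι → ℝ} (hγ : γ ∈ stdSimplex ℝ ι) :
    f ⬝ᵥ (∑ j, γ j • Q j) *ᵥ f ≤ 1 :=
  calc f ⬝ᵥ (∑ j, γ j • Q j) *ᵥ f = ∑ j, γ j * (f ⬝ᵥ Q j *ᵥ f) := by
        simp only [sum_mulVec, dotProduct_sum, smul_mulVec, dotProduct_smul, smul_eq_mul]
    _ ≤ ∑ j, γ j * 1 := by gcongr with j; exacts [hγ.1 j, hf j]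
    _ = 1 := by simpa using hγ.2

end Matrix

/-- if `f Q_j fᵀ ≤ 1` for every `j`, then every `x` in the composite unit
ball `{x | V_c(x) ≤ 1}` satisfies the state constraint `|f · x| ≤ 1`. -/
theorem comp_unit_ball_state_constraint (m n : ℕ) (hm : 0 < m)
    (Q : Fin m → Matrix (Fin n) (Fin n) ℝ) (hQ : ∀ j, (Q j).PosDef)
    (f : Fin n → ℝ) (hf : ∀ j : Fin m, f ⬝ᵥ (Q j).mulVec f ≤ 1) :
    ∀ x : Fin n → ℝ, compQuad Q x ≤ 1 → |f ⬝ᵥ x| ≤ 1 := by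
  intro x hx
  rw [← sq_le_one_iff_abs_le_one]
  refine le_trans ?_ hx
  refine le_csInf ⟨_, _, single_mem_stdSimplex ℝ ⟨0, hm⟩, rfl⟩ ?_
  rintro _ ⟨γ, hγ, rfl⟩
  have hP := posDef_sum_smul_of_mem_stdSimplex_s18 hQ hγ
  calc (f ⬝ᵥ x) ^ 2 ≤ (f ⬝ᵥ (∑ j, γ j • Q j) *ᵥ f) * (x ⬝ᵥ (∑ j, γ j • Q j)⁻¹ *ᵥ x) :=
        hP.dotProduct_sq_le_mul_inv f x
    _ ≤ x ⬝ᵥ (∑ j, γ j • Q j)⁻¹ *ᵥ x :=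
        mul_le_of_le_one_left (by simpa using hP.inv.posSemidef.dotProduct_mulVec_nonneg x)
          (dotProduct_sum_smul_mulVec_le_one hf hγ)
end
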